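/- arXiv:2409.14525 — 8 statements merged into one kernel-verified Lean document; each statement's English description precedes it below -/
import Mathlib

section
/- Let φ : G →* H and ψ : H →* K be surjective group homomorphisms, and let ε : FreeGroup σ →* G be a surjective homomorphism (so G, H, K are all marked quotients of the free group F = FreeGroup σ, via ε, φ∘ε and ψ∘φ∘ε respectively). Let Θ = (S', C, D) be a directed tileset with memory set S' ⊆ F, and let a, b ∈ K. If there exists a finite strong directed Θ-snake (ω, x) in (H, φ∘ε) with ψ(ω(0)) = a and ψ(ω(ℓ)) = b, then there exists a finite strong directed Θ-snake (ω', x') in (G, ε) with ψ(φ(ω'(0))) = a and ψ(φ(ω'(ℓ'))) = b. -/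
/-!
Lift the starting point `ω 0` of the snake through `φ` and walk in `G` along the directions
`(x i).2` of the same colours. The lifted path maps onto the given one, so injectivity and the
domino constraints, which only involve equations `ω j = ω i * ε s`, pull back along `φ`.
-/

/-- A directed tileset over the free group `FreeGroup σ` with base colour type `C₀`:
a finite memory set `S'`, a finite colour set `C ⊆ C₀ × S'`, and a finite domino set
`D ⊆ C × S' × C`. -/
structure DirTileset (σ : Type) (C₀ : Type) where
  S' : Finset (FreeGroup σ)
  C : Finset (C₀ × FreeGroup σ)
  D : Finset ((C₀ × FreeGroup σ) × FreeGroup σ × (C₀ × FreeGroup σ))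
  mem_S' : ∀ c ∈ C, c.2 ∈ S'
  dom_mem : ∀ d ∈ D, d.1 ∈ C ∧ d.2.1 ∈ S' ∧ d.2.2 ∈ C

/-- A finite strong directed `Θ`-snake in `(M, εM)`, indexed by `{0, …, ℓ}`: maps
`ω : {0,…,ℓ} → M` injective and `x : {0,…,ℓ} → C` (presented as functions on `ℕ`,
constrained only on `{0,…,ℓ}`) such that `ω (i+1) = ω i * εM ((x i).2)` for consecutive
indices, and `(x i, s, x j) ∈ D` whenever `i, j ≤ ℓ`, `s ∈ S'` and `ω j = ω i * εM s`. -/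
def IsFinSnake {σ C₀ : Type} {M : Type} [Group M] (εM : FreeGroup σ →* M)
    (Θ : DirTileset σ C₀) (ℓ : ℕ) (ω : ℕ → M) (x : ℕ → C₀ × FreeGroup σ) : Prop :=
  (∀ i ≤ ℓ, ∀ j ≤ ℓ, ω i = ω j → i = j) ∧
  (∀ i ≤ ℓ, x i ∈ Θ.C) ∧
  (∀ i, i + 1 ≤ ℓ → ω (i + 1) = ω i * εM (x i).2) ∧
  (∀ i ≤ ℓ, ∀ j ≤ ℓ, ∀ s ∈ Θ.S', ω j = ω i * εM s → (x i, (s, x j)) ∈ Θ.D)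

variable {σ C₀ M G H : Type} [Group M] [Group G] [Group H]

def snakePath (εM : FreeGroup σ →* M) (m : M) (x : ℕ → C₀ × FreeGroup σ) : ℕ → M
  | 0 => m
  | n + 1 => snakePath εM m x n * εM (x n).2

namespace IsFinSnake

variable {Θ : DirTileset σ C₀} {ℓ : ℕ} {x : ℕ → C₀ × FreeGroup σ}
  {φ : G →* H} {ε : FreeGroup σ →* G} {ω : ℕ → H}

theorem map_snakePath (hs : IsFinSnake (φ.comp ε) Θ ℓ ω x) {g : G} (hg : φ g = ω 0) :
    ∀ i ≤ ℓ, φ (snakePath ε g x i) = ω i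
  | 0, _ => hg
  | i + 1, hi => by
    rw [snakePath, map_mul, map_snakePath hs hg i (Nat.le_of_succ_le hi), hs.2.2.1 i hi]
    rfl

theorem of_comp (hs : IsFinSnake (φ.comp ε) Θ ℓ ω x) {ω' : ℕ → G}
    (hlift : ∀ i ≤ ℓ, φ (ω' i) = ω i)
    (hstep : ∀ i, i + 1 ≤ ℓ → ω' (i + 1) = ω' i * ε (x i).2) :
    IsFinSnake ε Θ ℓ ω' x := by
  obtain ⟨hinj, hC, -, hdom⟩ := hs
  refine ⟨fun i hi j hj hij => ?_, hC, hstep, fun i hi j hj s hs heq => ?_⟩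
  · exact hinj i hi j hj (by rw [← hlift i hi, ← hlift j hj, hij])
  · refine hdom i hi j hj s hs ?_
    rw [← hlift i hi, ← hlift j hj, heq, map_mul]
    rfl

end IsFinSnake

theorem finite_strong_directed_snake_lifts_general
    {σ C₀ G H K : Type} [Group G] [Group H] [Group K]
    (φ : G →* H) (hφ : Function.Surjective φ)
    (ψ : H →* K)
    (ε : FreeGroup σ →* G)
    (Θ : DirTileset σ C₀) (a b : K)
    (h : ∃ (ℓ : ℕ) (ω : ℕ → H) (x : ℕ → C₀ × FreeGroup σ),
      IsFinSnake (φ.comp ε) Θ ℓ ω x ∧ ψ (ω 0) = a ∧ ψ (ω ℓ) = b) :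
    ∃ (ℓ' : ℕ) (ω' : ℕ → G) (x' : ℕ → C₀ × FreeGroup σ),
      IsFinSnake ε Θ ℓ' ω' x' ∧ ψ (φ (ω' 0)) = a ∧ ψ (φ (ω' ℓ')) = b := by
  obtain ⟨ℓ, ω, x, hs, ha, hb⟩ := h
  obtain ⟨g, hg⟩ := hφ (ω 0)
  have hlift := hs.map_snakePath hg
  refine ⟨ℓ, snakePath ε g x, x, hs.of_comp hlift fun i _ => rfl, ?_, ?_⟩
  · rw [hlift 0 ℓ.zero_le, ha]
  · rw [hlift ℓ le_rfl, hb]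

theorem finite_strong_directed_snake_lifts
    {σ C₀ G H K : Type} [Fintype σ] [Fintype C₀] [Group G] [Group H] [Group K]
    (φ : G →* H) (hφ : Function.Surjective φ)
    (ψ : H →* K) (hψ : Function.Surjective ψ)
    (ε : FreeGroup σ →* G) (hε : Function.Surjective ε)
    (Θ : DirTileset σ C₀) (a b : K)
    (h : ∃ (ℓ : ℕ) (ω : ℕ → H) (x : ℕ → C₀ × FreeGroup σ),
      IsFinSnake (φ.comp ε) Θ ℓ ω x ∧ ψ (ω 0) = a ∧ ψ (ω ℓ) = b) :
    ∃ (ℓ' : ℕ) (ω' : ℕ → G) (x' : ℕ → C₀ × FreeGroup σ),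
      IsFinSnake ε Θ ℓ' ω' x' ∧ ψ (φ (ω' 0)) = a ∧ ψ (φ (ω' ℓ')) = b :=
  finite_strong_directed_snake_lifts_general φ hφ ψ ε Θ a b h
end

section
/- Let G be a group, S ⊆ G a finite generating set, and Θ = (C, D) a tileset over (G,S). Define the directed tileset Θ' over (G,S) with colour set C × S and domino set D' = { ((c,s), s', (c',s'')) : (c, s', c') ∈ D, s, s'' ∈ S }. Then for each n ∈ ℕ (with the convention ℤ/0ℤ = ℤ): there exists a strong directed Θ'-snake ω : ℤ/nℤ → G if and only if there exists a strong Θ-snake ω : ℤ/nℤ → G. In particular G admits a strong directed Θ'-snake (n arbitrary), a strong directed infinite Θ'-snake (n = 0), or a strong directed Θ'-ouroboros (n ≥ 1) if and only if it admits a strong Θ-snake, a strong infinite Θ-snake, or a strong Θ-ouroboros, respectively. -/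
/-!
STATEMENT 6: Let `G` be a group, `S ⊆ G` a finite generating set and `Θ = (C, D)` a
tileset over `(G, S)`.  Let `Θ'` be the directed tileset with colour set `C × S` and
domino set `D' = { ((c,s), s', (c',s'')) : (c, s', c') ∈ D }` (membership in `D'` only
depends on the underlying `D`-domino, so it is inlined below).  Then for each `n ∈ ℕ`
(with `ZMod 0 = ℤ`): there is a strong directed `Θ'`-snake `ω : ℤ/nℤ → G` iff there is
a strong `Θ`-snake `ω : ℤ/nℤ → G`.  Taking all `n`, `n = 0`, or `n ≥ 1` gives the
snake / infinite snake / ouroboros statements respectively.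
-/

/-- A snake: an injective `ω : ℤ/nℤ → G` all of whose steps lie in `S` (convention
`ZMod 0 = ℤ`; `n = 0` is an infinite snake, `n ≥ 1` an ouroboros). -/
def IsSnake {G : Type} [Group G] (S : Finset G) {n : ℕ} (ω : ZMod n → G) : Prop :=
  Function.Injective ω ∧ ∀ i : ZMod n, (ω i)⁻¹ * ω (i + 1) ∈ S

theorem strong_directed_iff_strong
    {G : Type} [Group G] (S : Finset G) (hS : Subgroup.closure (S : Set G) = ⊤)
    (C : Type) [Fintype C] (D : Set (C × S × C)) (n : ℕ) :
    -- a strong directed Θ'-snake, Θ' = (C × S, D'),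
    -- where ((c,s), s', (c',s'')) ∈ D' ↔ (c, s', c') ∈ D
    (∃ (ω : ZMod n → G) (x : ZMod n → C × S),
        IsSnake S ω ∧
        -- directedness: the second component of the colour at ω i is the step to ω (i+1)
        (∀ i : ZMod n, ω (i + 1) = ω i * ((x i).2 : G)) ∧
        -- strong tiling condition for D'
        (∀ i j : ZMod n, ∀ s : S, ω j = ω i * (s : G) → ((x i).1, (s, (x j).1)) ∈ D))
    ↔
    -- a strong Θ-snake
    (∃ (ω : ZMod n → G) (x : ZMod n → C),
        IsSnake S ω ∧
        (∀ i j : ZMod n, ∀ s : S, ω j = ω i * (s : G) → (x i, (s, x j)) ∈ D)) := by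
  constructor
  · rintro ⟨ω, x, hs, -, hD⟩
    exact ⟨ω, fun i => (x i).1, hs, hD⟩
  · rintro ⟨ω, x, hs, hD⟩
    refine ⟨ω, fun i => (x i, ⟨(ω i)⁻¹ * ω (i + 1), hs.2 i⟩), hs, fun i => ?_, hD⟩
    simp
end

section
/- Let G be a group, S ⊆ G a finite generating set, and Θ = (C, D) a directed tileset over (G,S), so C ⊆ C₀ × S and D ⊆ C × S × C. Define the directed tileset Θ' = (C, D') with D' = D ∪ { ((c,s), s'', (c',s')) ∈ C × S × C : s'' ≠ s }. Then for each n ∈ ℕ (with the convention ℤ/0ℤ = ℤ), the strong directed Θ'-snakes ω : ℤ/nℤ → G are exactly the weak directed Θ-snakes ω : ℤ/nℤ → G; in particular one exists for Θ' (in the strong directed sense) if and only if one exists for Θ (in the weak directed sense). -/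
/-!
STATEMENT 8: Let `G` be a group, `S ⊆ G` a finite generating set and `Θ = (C, D)` a
directed tileset over `(G, S)`, so `C ⊆ C₀ × S` and `D ⊆ C × S × C`.  Let
`Θ' = (C, D')` with `D' = D ∪ { ((c,s), s'', (c',s')) ∈ C × S × C : s'' ≠ s }`.
Then for each `n ∈ ℕ` (with `ZMod 0 = ℤ`) the strong directed `Θ'`-snakes
`ω : ℤ/nℤ → G` are exactly the weak directed `Θ`-snakes `ω : ℤ/nℤ → G`; in particular
one exists for `Θ'` (strong directed sense) iff one exists for `Θ` (weak directed
sense).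
-/

theorem strong_directed_snakes_eq_weak_directed_snakes
    {G : Type} [Group G] (S : Finset G) (hS : Subgroup.closure (S : Set G) = ⊤)
    (C₀ : Type) [Fintype C₀]
    (C : Set (C₀ × S))
    (D : Set ((C₀ × S) × S × (C₀ × S)))
    (hD : ∀ d ∈ D, d.1 ∈ C ∧ d.2.2 ∈ C) :
    -- D' = D ∪ { ((c,s), s'', (c',s')) ∈ C × S × C : s'' ≠ s }
    ∀ (D' : Set ((C₀ × S) × S × (C₀ × S))),
      D' = D ∪ {d | d.1 ∈ C ∧ d.2.2 ∈ C ∧ d.2.1 ≠ d.1.2} →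
      ∀ (n : ℕ) (ω : ZMod n → G) (x : ZMod n → C₀ × S),
        -- (ω, x) is a strong directed Θ'-snake
        (Function.Injective ω ∧
         (∀ i : ZMod n, x i ∈ C) ∧
         (∀ i : ZMod n, ω (i + 1) = ω i * ((x i).2 : G)) ∧
         (∀ i j : ZMod n, ∀ s : S, ω j = ω i * (s : G) → (x i, (s, x j)) ∈ D'))
        ↔
        -- (ω, x) is a weak directed Θ-snake
        (Function.Injective ω ∧
         (∀ i : ZMod n, x i ∈ C) ∧
         (∀ i : ZMod n, ω (i + 1) = ω i * ((x i).2 : G)) ∧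
         (∀ i : ZMod n, (x i, ((x i).2, x (i + 1))) ∈ D)) := by
  intro D' hD' n ω x
  subst hD'
  constructor
  · rintro ⟨hinj, hC, hstep, hstrong⟩
    refine ⟨hinj, hC, hstep, fun i => ?_⟩
    have h := hstrong i (i + 1) ((x i).2) (hstep i)
    rcases h with h | h
    · exact h
    · exact absurd rfl h.2.2
  · rintro ⟨hinj, hC, hstep, hweak⟩
    refine ⟨hinj, hC, hstep, fun i j s hs => ?_⟩
    by_cases hcase : s = (x i).2
    · subst hcase
      have : j = i + 1 := hinj (by rw [hstep i, hs])
      subst this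
      exact Or.inl (hweak i)
    · exact Or.inr ⟨hC i, hC j, hcase⟩
end

section
/- Let G be a group, S ⊆ T ⊆ G finite subsets with S generating G, and let Θ be a directed tileset over (G,S). Then there exists a directed tileset Θ' over (G,T) such that for each n ∈ ℕ (with the convention ℤ/0ℤ = ℤ): G admits a strong directed Θ'-snake ω : ℤ/nℤ → G if and only if G admits a strong directed Θ-snake ω : ℤ/nℤ → G. -/
/-!
STATEMENT 9: Let `G` be a group, `S ⊆ T ⊆ G` finite subsets with `S` generating `G`,
and `Θ` a directed tileset over `(G, S)`.  Then there is a directed tileset `Θ'` over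
`(G, T)` such that for each `n ∈ ℕ` (with `ZMod 0 = ℤ`): `G` admits a strong directed
`Θ'`-snake `ω : ℤ/nℤ → G` (steps in `T`) iff it admits a strong directed `Θ`-snake
`ω : ℤ/nℤ → G` (steps in `S`).
-/

/-- `G` admits a strong directed snake `ω : ℤ/nℤ → G` with steps in the finite subset
`S ⊆ G`, for the directed tileset with colour set `C₀ × S` and domino set `D`:
`ω` is injective, the snake follows the direction carried by the second component of its
colour (so in particular all steps lie in `S`), and whenever `ω i` and `ω j = ω i * s`
both lie on the snake for some `s ∈ S`, the domino `(x i, s, x j)` belongs to `D`. -/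
def StrongDirSnakeExists {G : Type} [Group G] (S : Finset G) (C₀ : Type)
    (D : Set ((C₀ × S) × S × (C₀ × S))) (n : ℕ) : Prop :=
  ∃ (ω : ZMod n → G) (x : ZMod n → C₀ × S),
    Function.Injective ω ∧
    (∀ i : ZMod n, ω (i + 1) = ω i * ((x i).2 : G)) ∧
    (∀ i j : ZMod n, ∀ s : S, ω j = ω i * (s : G) → (x i, (s, x j)) ∈ D)

theorem exists_equivalent_tileset_for_bigger_generating_set
    {G : Type} [Group G] (S T : Finset G) (hST : S ⊆ T)
    (hS : Subgroup.closure (S : Set G) = ⊤)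
    (C₀ : Type) [Fintype C₀]
    (D : Set ((C₀ × S) × S × (C₀ × S))) :
    ∃ (C' : Type) (_ : Fintype C') (D' : Set ((C' × T) × T × (C' × T))),
      ∀ n : ℕ, StrongDirSnakeExists T C' D' n ↔ StrongDirSnakeExists S C₀ D n := by
  classical
  refine ⟨C₀, inferInstance,
    {p | ∃ (ht : (p.1.2 : G) ∈ S) (ht'' : (p.2.2.2 : G) ∈ S),
      ∀ hs : (p.2.1 : G) ∈ S,
        ((p.1.1, ⟨(p.1.2 : G), ht⟩), (⟨(p.2.1 : G), hs⟩ : S),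
          (p.2.2.1, ⟨(p.2.2.2 : G), ht''⟩)) ∈ D}, fun n => ?_⟩
  constructor
  · rintro ⟨ω, x, hinj, hdir, hdom⟩
    have hstep : ∀ i, ((x i).2 : G) ∈ S := fun i =>
      (hdom i (i + 1) (x i).2 (hdir i)).1
    refine ⟨ω, fun i => ((x i).1, ⟨((x i).2 : G), hstep i⟩), hinj, fun i => hdir i, ?_⟩
    intro i j s hji
    obtain ⟨ht, ht'', hD⟩ := hdom i j ⟨(s : G), hST s.2⟩ hji
    exact hD s.2
  · rintro ⟨ω, x, hinj, hdir, hdom⟩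
    refine ⟨ω, fun i => ((x i).1, ⟨((x i).2 : G), hST (x i).2.2⟩), hinj,
      fun i => hdir i, ?_⟩
    intro i j t hji
    exact ⟨(x i).2.2, (x j).2.2, fun hs => hdom i j ⟨(t : G), hs⟩ hji⟩
end

section
/- Let G be a group and S ⊆ G a finite symmetric generating set (S = S⁻¹, 1 ∉ S), and let Θ = (C,D) be a tileset over (G,S). Then the following are equivalent: (1) G admits a strong infinite Θ-snake; (2) there exists an infinite subset X ⊆ G that is connected in the Cayley graph of (G,S) (any two elements of X are joined by a finite path inside X each of whose steps lies in S), together with a colouring x : X → C such that (x(g), s, x(g·s)) ∈ D for every g ∈ X and s ∈ S with g·s ∈ X. -/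
/-!
The image of a strong snake is an infinite connected tiled set: walk along the snake, backwards
when needed, which is allowed since `S = S⁻¹`.

Conversely, balls of the Cayley graph are finite, so an infinite connected `X` contains points
arbitrarily far from a base point, and shortest walks to them inside `X` are injective: this gives
injective walks of every length in `X`. Recentre the walk of length `2 n` at its midpoint; its
`i`-th point then lies in the ball of radius `|i|` about `1`, so point and colour range over a
finite set independent of `n`. A compactness (ultrafilter) argument yields a bi-infinite limit each
finite window of which is a translate of a window of one of the walks, and injectivity, steps in
`S` and the tiling constraints are all checked on windows of size two.
-/

open Filter Set Pointwise

section Walk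

variable {α : Type*} (R : α → α → Prop) (X : Set α)

def IsWalk (p : ℕ → α) (k : ℕ) : Prop :=
  (∀ i ≤ k, p i ∈ X) ∧ ∀ i < k, R (p i) (p (i + 1))

def WalkConnected : Prop :=
  ∀ a ∈ X, ∀ b ∈ X, ∃ (k : ℕ) (p : ℕ → α), p 0 = a ∧ p k = b ∧ IsWalk R X p k

variable {R X} {p : ℕ → α} {k : ℕ}

lemma IsWalk.mono {m : ℕ} (h : IsWalk R X p k) (hm : m ≤ k) : IsWalk R X p m :=
  ⟨fun i hi => h.1 i (hi.trans hm), fun i hi => h.2 i (hi.trans_le hm)⟩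

lemma IsWalk.reverse (hR : Std.Symm R) (h : IsWalk R X p k) :
    IsWalk R X (fun i => p (k - i)) k := by
  refine ⟨fun i _ => h.1 _ (Nat.sub_le _ _), fun i hi => hR.symm _ _ ?_⟩
  have := h.2 (k - (i + 1)) (by omega)
  rwa [show k - (i + 1) + 1 = k - i by omega] at this

lemma IsWalk.splice {a b : ℕ} (h : IsWalk R X p k) (hab : a < b) (hbk : b ≤ k)
    (heq : p a = p b) :
    ∃ q : ℕ → α, q 0 = p 0 ∧ q (k - (b - a)) = p k ∧ IsWalk R X q (k - (b - a)) := by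
  refine ⟨fun i => if i ≤ a then p i else p (i + (b - a)), by simp, ?_, fun i hi => ?_,
    fun i hi => ?_⟩
  · dsimp only
    split_ifs
    · rw [show k - (b - a) = a by omega, heq, show b = k by omega]
    · rw [Nat.sub_add_cancel (by omega)]
  · dsimp only
    split_ifs <;> exact h.1 _ (by omega)
  · dsimp only
    split_ifs with h₁ h₂ h₂
    · exact h.2 i (by omega)
    · obtain rfl : i = a := by omega
      rw [heq, show i + 1 + (b - i) = b + 1 by omega]
      exact h.2 b (by omega)
    · omega
    · rw [show i + 1 + (b - a) = i + (b - a) + 1 by omega]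
      exact h.2 _ (by omega)

lemma IsWalk.exists_injOn (h : IsWalk R X p k) :
    ∃ (l : ℕ) (q : ℕ → α), q 0 = p 0 ∧ q l = p k ∧ IsWalk R X q l ∧ InjOn q (Iic l) := by
  classical
  have hP : ∃ l, ∃ q : ℕ → α, q 0 = p 0 ∧ q l = p k ∧ IsWalk R X q l := ⟨k, p, rfl, rfl, h⟩
  obtain ⟨q, hq0, hql, hq⟩ := Nat.find_spec hP
  refine ⟨Nat.find hP, q, hq0, hql, hq, fun a ha b hb hab => ?_⟩
  by_contra hne
  wlog hlt : a < b generalizing a b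
  · exact this b hb a ha hab.symm (Ne.symm hne) (by omega)
  have hb' : b ≤ Nat.find hP := hb
  obtain ⟨r, hr0, hrl, hr⟩ := hq.splice hlt hb' hab
  exact Nat.find_min hP (by omega : Nat.find hP - (b - a) < Nat.find hP)
    ⟨r, hr0.trans hq0, hrl.trans hql, hr⟩

lemma walkConnected_range {ω : ℤ → α} (hR : Std.Symm R) (hω : ∀ i, R (ω i) (ω (i + 1))) :
    WalkConnected R (range ω) := by
  rintro _ ⟨i, rfl⟩ _ ⟨j, rfl⟩
  wlog hij : i ≤ j generalizing i j
  · obtain ⟨k, p, hp0, hpk, hp⟩ := this j i (by omega)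
    exact ⟨k, fun m => p (k - m), by simpa using hpk, by simpa using hp0, hp.reverse hR⟩
  refine ⟨(j - i).toNat, fun m => ω (i + m), by simp,
    by simp [Int.toNat_of_nonneg (sub_nonneg.2 hij)], fun m _ => mem_range_self _, fun m _ => ?_⟩
  simpa [add_assoc] using hω (i + m)

end Walk

lemma exists_frequently_forall_eq_of_eventually_mem_finite {ι β : Type*} (f : ℕ → ι → β)
    (K : ι → Set β) (hK : ∀ i, (K i).Finite) (hf : ∀ i, ∀ᶠ n in atTop, f n i ∈ K i) :
    ∃ a : ι → β, ∀ I : Finset ι, ∃ᶠ n in atTop, ∀ i ∈ I, f n i = a i := by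
  let U := hyperfilter ℕ
  have hU : (U : Filter ℕ) ≤ atTop := Nat.cofinite_eq_atTop ▸ hyperfilter_le_cofinite
  have hconst (i : ι) : ∃ b, ∀ᶠ n in U, f n i = b := by
    obtain ⟨b, -, hb⟩ := (U.eventually_exists_mem_iff (P := fun b n => f n i = b) (hK i)).1
      (((hf i).filter_mono hU).mono fun n hn => ⟨_, hn, rfl⟩)
    exact ⟨b, hb⟩
  choose a ha using hconst
  exact ⟨a, fun I => ((eventually_all_finset I).2 fun i _ => ha i).frequently.filter_mono hU⟩

section Cayley

variable {G : Type*} [Group G] (S : Finset G)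

def CayleyAdj (g h : G) : Prop := g⁻¹ * h ∈ S

def IsStrongSnake {C : Type*} (D : Set (C × S × C)) (ω : ℤ → G) (x : ℤ → C) : Prop :=
  Function.Injective ω ∧ (∀ i, CayleyAdj S (ω i) (ω (i + 1))) ∧
    ∀ i j : ℤ, ∀ s : S, ω j = ω i * (s : G) → (x i, (s, x j)) ∈ D

variable {S}

lemma cayleyAdj_symmetric (hsymm : ∀ s ∈ S, s⁻¹ ∈ S) : Std.Symm (CayleyAdj S) :=
  ⟨fun g h hgh => by simpa [CayleyAdj] using hsymm _ hgh⟩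

lemma cayleyAdj_mul_left_iff {g x y : G} : CayleyAdj S (g * x) (g * y) ↔ CayleyAdj S x y := by
  simp [CayleyAdj, mul_assoc]

lemma IsWalk.inv_mul_mem_pow [DecidableEq G] {X : Set G} {p : ℕ → G} {k a b : ℕ}
    (h : IsWalk (CayleyAdj S) X p k) (hab : a ≤ b) (hbk : b ≤ k) :
    (p a)⁻¹ * p b ∈ insert 1 S ^ (b - a) := by
  induction b, hab using Nat.le_induction with
  | base => simp
  | succ b hab ih =>
    rw [show (p a)⁻¹ * p (b + 1) = (p a)⁻¹ * p b * ((p b)⁻¹ * p (b + 1)) by group,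
      show b + 1 - a = b - a + 1 by omega, pow_succ]
    exact Finset.mul_mem_mul (ih (by omega)) (Finset.mem_insert_of_mem (h.2 b (by omega)))

lemma exists_injOn_walk_of_infinite {X : Set G} (hX : X.Infinite)
    (hconn : WalkConnected (CayleyAdj S) X) (m : ℕ) :
    ∃ p : ℕ → G, IsWalk (CayleyAdj S) X p m ∧ InjOn p (Iic m) := by
  classical
  obtain ⟨g₀, hg₀⟩ := hX.nonempty
  obtain ⟨h, hh, hfar⟩ := hX.exists_notMem_finset ((insert 1 S ^ m).image (g₀ * ·))
  obtain ⟨k, p, hp0, hpk, hp⟩ := hconn g₀ hg₀ h hh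
  obtain ⟨l, q, hq0, hql, hq, hinj⟩ := hp.exists_injOn
  have hml : m < l := by
    by_contra! hlm
    refine hfar (Finset.mem_image.2 ⟨_, Finset.pow_subset_pow_right (Finset.mem_insert_self _ _)
      (by omega) (hq.inv_mul_mem_pow (Nat.zero_le l) le_rfl), ?_⟩)
    simp [hq0, hql, hp0, hpk]
  exact ⟨q, hq.mono hml.le, hinj.mono (Iic_subset_Iic.2 hml.le)⟩

end Cayley

section Snake

variable {G : Type*} [Group G] {S : Finset G} {C : Type*} {D : Set (C × S × C)}

lemma exists_isStrongSnake_of_forall_injOn_walk [Finite C] {X : Set G} (c : G → C)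
    (hc : ∀ g ∈ X, ∀ s : S, g * s ∈ X → (c g, (s, c (g * s))) ∈ D)
    (hwalk : ∀ m, ∃ p : ℕ → G, IsWalk (CayleyAdj S) X p m ∧ InjOn p (Iic m)) :
    ∃ (ω : ℤ → G) (x : ℤ → C), IsStrongSnake S D ω x := by
  classical
  choose p hp hinj using fun n => hwalk (2 * n)
  let f : ℕ → ℤ → G × C := fun n i => ((p n n)⁻¹ * p n (n + i).toNat, c (p n (n + i).toNat))
  let ball : ℕ → Finset G := fun m => insert 1 S ^ m ∪ (insert 1 S ^ m)⁻¹
  have hf (i : ℤ) : ∀ᶠ n in atTop, f n i ∈ (ball i.natAbs : Set G) ×ˢ univ := by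
    filter_upwards [eventually_ge_atTop i.natAbs] with n hn
    refine ⟨Finset.mem_union.2 ?_, trivial⟩
    rcases le_or_gt 0 i with hi | hi
    · have := (hp n).inv_mul_mem_pow (a := n) (b := (n + i).toNat) (by omega) (by omega)
      exact Or.inl (by rwa [show (n + i).toNat - n = i.natAbs by omega] at this)
    · have := (hp n).inv_mul_mem_pow (a := (n + i).toNat) (b := n) (by omega) (by omega)
      refine Or.inr (Finset.mem_inv'.2 ?_)
      rwa [show n - (n + i).toNat = i.natAbs by omega, ← inv_inv (p n n), ← mul_inv_rev] at this
  obtain ⟨a, ha⟩ := exists_frequently_forall_eq_of_eventually_mem_finite f _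
    (fun i => (Finset.finite_toSet _).prod finite_univ) hf
  have hpair (i j : ℤ) : ∃ n, i.natAbs ≤ n ∧ j.natAbs ≤ n ∧ a i = f n i ∧ a j = f n j := by
    obtain ⟨n, hfa, hn⟩ :=
      ((ha {i, j}).and_eventually (eventually_ge_atTop (max i.natAbs j.natAbs))).exists
    exact ⟨n, le_of_max_le_left hn, le_of_max_le_right hn, (hfa i (by simp)).symm,
      (hfa j (by simp)).symm⟩
  refine ⟨fun i => (a i).1, fun i => (a i).2, fun i j hij => ?_, fun i => ?_, fun i j s hij => ?_⟩
  · obtain ⟨n, hi, hj, hai, haj⟩ := hpair i j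
    simp only [hai, haj, f, mul_right_inj] at hij
    have := hinj n (mem_Iic.2 (by omega)) (mem_Iic.2 (by omega)) hij
    omega
  · obtain ⟨n, hi, hj, hai, haj⟩ := hpair i (i + 1)
    simp only [hai, haj, f, cayleyAdj_mul_left_iff]
    rw [show (n + (i + 1)).toNat = (n + i).toNat + 1 by omega]
    exact (hp n).2 _ (by omega)
  · obtain ⟨n, hi, hj, hai, haj⟩ := hpair i j
    simp only [hai, haj, f, mul_assoc, mul_right_inj] at hij ⊢
    have hmem (k : ℤ) (hk : k.natAbs ≤ n) : p n (n + k).toNat ∈ X := (hp n).1 _ (by omega)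
    rw [hij]
    exact hc _ (hmem i hi) s (hij ▸ hmem j hj)

end Snake

theorem strong_infinite_snake_iff_infinite_connected_tiled_subset_general
    {G : Type} [Group G] (S : Finset G)
    (hsymm : ∀ s ∈ S, s⁻¹ ∈ S)
    (C : Type) [Fintype C] (D : Set (C × S × C)) :
    -- (1) a strong infinite Θ-snake exists
    (∃ (ω : ℤ → G) (x : ℤ → C),
        Function.Injective ω ∧
        (∀ i : ℤ, (ω i)⁻¹ * ω (i + 1) ∈ S) ∧
        (∀ i j : ℤ, ∀ s : S, ω j = ω i * (s : G) → (x i, (s, x j)) ∈ D))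
    ↔
    -- (2) an infinite Cayley-connected subset X ⊆ G with a valid colouring exists
    (∃ X : Set G,
        X.Infinite ∧
        -- X is connected in the Cayley graph of (G, S)
        (∀ g ∈ X, ∀ h ∈ X, ∃ (k : ℕ) (p : ℕ → G),
          p 0 = g ∧ p k = h ∧ (∀ i ≤ k, p i ∈ X) ∧
          (∀ i < k, (p i)⁻¹ * p (i + 1) ∈ S)) ∧
        -- a colouring of X satisfying all the domino constraints inside X
        (∃ x : X → C, ∀ (g : X) (s : S), ∀ hgs : (g : G) * (s : G) ∈ X,
          (x g, (s, x ⟨(g : G) * (s : G), hgs⟩)) ∈ D)) := by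
  classical
  constructor
  · rintro ⟨ω, x, hinj, hstep, hx⟩
    refine ⟨range ω, infinite_range_of_injective hinj,
      walkConnected_range (cayleyAdj_symmetric hsymm) hstep, fun g => x g.2.choose,
      fun g s hgs => hx _ _ s ?_⟩
    rw [hgs.choose_spec, g.2.choose_spec]
  · rintro ⟨X, hX, hconn, x, hx⟩
    obtain ⟨g₀, hg₀⟩ := hX.nonempty
    let c : G → C := fun g => if hg : g ∈ X then x ⟨g, hg⟩ else x ⟨g₀, hg₀⟩
    have hc : ∀ g ∈ X, ∀ s : S, g * s ∈ X → (c g, (s, c (g * s))) ∈ D := fun g hg s hgs => by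
      simpa only [c, dif_pos hg, dif_pos hgs] using hx ⟨g, hg⟩ s hgs
    exact exists_isStrongSnake_of_forall_injOn_walk c hc (exists_injOn_walk_of_infinite hX hconn)

theorem strong_infinite_snake_iff_infinite_connected_tiled_subset
    {G : Type} [Group G] (S : Finset G)
    (hS : Subgroup.closure (S : Set G) = ⊤)
    (hsymm : ∀ s ∈ S, s⁻¹ ∈ S) (hone : (1 : G) ∉ S)
    (C : Type) [Fintype C] (D : Set (C × S × C)) :
    -- (1) a strong infinite Θ-snake exists
    (∃ (ω : ℤ → G) (x : ℤ → C),
        Function.Injective ω ∧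
        (∀ i : ℤ, (ω i)⁻¹ * ω (i + 1) ∈ S) ∧
        (∀ i j : ℤ, ∀ s : S, ω j = ω i * (s : G) → (x i, (s, x j)) ∈ D))
    ↔
    -- (2) an infinite Cayley-connected subset X ⊆ G with a valid colouring exists
    (∃ X : Set G,
        X.Infinite ∧
        -- X is connected in the Cayley graph of (G, S)
        (∀ g ∈ X, ∀ h ∈ X, ∃ (k : ℕ) (p : ℕ → G),
          p 0 = g ∧ p k = h ∧ (∀ i ≤ k, p i ∈ X) ∧
          (∀ i < k, (p i)⁻¹ * p (i + 1) ∈ S)) ∧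
        -- a colouring of X satisfying all the domino constraints inside X
        (∃ x : X → C, ∀ (g : X) (s : S), ∀ hgs : (g : G) * (s : G) ∈ X,
          (x g, (s, x ⟨(g : G) * (s : G), hgs⟩)) ∈ D)) :=
  strong_infinite_snake_iff_infinite_connected_tiled_subset_general S hsymm C D
end

section
/- Let G be a group and H a subgroup of G of finite index which is a free group. Then every finite subgroup K of G satisfies |K| ≤ [G : H], i.e. Nat.card K ≤ H.index. -/
/-!
Free groups are torsion-free, so the finite subgroup `K` meets `H` trivially. Hence
`|K| = [K : K ⊓ H] ≤ [G : H]`.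
-/

theorem IsFreeGroup.isMulTorsionFree (F : Type*) [Group F] [IsFreeGroup F] :
    IsMulTorsionFree F :=
  (IsFreeGroup.toFreeGroup F).injective.isMulTorsionFree (IsFreeGroup.toFreeGroup F).toMonoidHom

namespace Subgroup

variable {G : Type*} [Group G]

theorem disjoint_of_isMulTorsionFree_of_finite (H K : Subgroup G) [IsMulTorsionFree H]
    [Finite K] : Disjoint H K := by
  rw [disjoint_def]
  intro x hxH hxK
  have hx : IsOfFinOrder (⟨x, hxH⟩ : H) :=
    (isOfFinOrder_of_finite (⟨x, hxK⟩ : K)).mono (by rw [orderOf_mk, orderOf_mk])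
  simpa using congrArg Subtype.val hx.eq_one'

theorem card_le_index_of_disjoint {H K : Subgroup G} [H.FiniteIndex] (h : Disjoint H K) :
    Nat.card K ≤ H.index :=
  calc Nat.card K = H.relIndex K := by
        rw [relIndex, subgroupOf_eq_bot.mpr h, index_bot]
    _ ≤ H.relIndex ⊤ :=
        relIndex_le_of_le_right le_top (by simpa using FiniteIndex.index_ne_zero)
    _ = H.index := relIndex_top_right H

end Subgroup

theorem card_finite_subgroup_le_index_of_free
    {G : Type*} [Group G] (H : Subgroup G) [H.FiniteIndex] [IsFreeGroup H]
    (K : Subgroup G) (hK : Finite K) :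
    Nat.card K ≤ H.index :=
  have := IsFreeGroup.isMulTorsionFree H
  Subgroup.card_le_index_of_disjoint (Subgroup.disjoint_of_isMulTorsionFree_of_finite H K)
end

section
/- Let A be a finite group, C and C' subgroups of A, and φ : C ≃* C' an isomorphism. Then the HNN extension HNNExtension A C C' φ is virtually free: it has a subgroup of finite index which is a free group. -/
/-!
`A` acts on itself by left multiplication, and `C`, `C'` act freely on `A` with the same number of
orbits, so some permutation `σ` of `A` satisfies `σ (c * x) = φ c * σ x`. Sending `t` to `σ` gives
a homomorphism `Φ` from `G = HNNExtension A C C' φ` to the finite group `Perm A`, injective on `A`;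
hence `N = ker Φ` has finite index and `A` acts freely on `V = G ⧸ N`.

Whenever `A` acts freely on a `G`-set `V`, the action groupoid of `G` on `V` is free. A functor
from it to a group `X` is a homomorphism `G →* (V → X) ⋊ G` over the identity. Such a homomorphism
is determined by the labels of the arrows from each `A`-orbit representative to the other points of
its orbit and of one `t`-arrow out of each `C`-orbit representative, and any labels arise, since the
relation `t * c = φ c * t` only ties together the `t`-arrows out of a single `C`-orbit. The vertex
group of a free connected groupoid is free, and here it is `N`.
-/

open CategoryTheory HNNExtension

namespace Subgroup

variable {A : Type*} [Group A] (C : Subgroup A)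

lemma mk_mul_out_rightRel (c : C) (q : Quotient (QuotientGroup.rightRel C)) :
    Quotient.mk (QuotientGroup.rightRel C) ((c : A) * q.out) = q := by
  conv_rhs => rw [← q.out_eq]
  exact Quotient.sound (QuotientGroup.rightRel_apply.mpr (by simp))

noncomputable def prodQuotientRightRelEquiv : C × Quotient (QuotientGroup.rightRel C) ≃ A where
  toFun p := p.1 * p.2.out
  invFun a := (⟨a * (Quotient.mk _ a).out⁻¹,
      QuotientGroup.rightRel_apply.mp (Quotient.exact (Quotient.out_eq _))⟩, Quotient.mk _ a)
  left_inv := fun ⟨c, q⟩ => by ext <;> simp [mk_mul_out_rightRel]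
  right_inv a := by simp

lemma prodQuotientRightRelEquiv_mul (c d : C) (q : Quotient (QuotientGroup.rightRel C)) :
    C.prodQuotientRightRelEquiv (c * d, q) = c * C.prodQuotientRightRelEquiv (d, q) :=
  mul_assoc _ _ _

lemma card_quotientRightRel : Nat.card (Quotient (QuotientGroup.rightRel C)) = C.index :=
  Nat.card_congr (QuotientGroup.quotientRightRelEquivQuotientLeftRel C)

lemma exists_perm_mul_eq_map_mul [Finite A] {C' : Subgroup A} (φ : C ≃* C') :
    ∃ σ : Equiv.Perm A, ∀ (c : C) (x : A), σ (c * x) = φ c * σ x := by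
  have h_index : C.index = C'.index := by
    refine Nat.eq_of_mul_eq_mul_left (Nat.card_pos (α := C)) ?_
    rw [card_mul_index, Nat.card_congr φ.toEquiv, card_mul_index]
  obtain ⟨β⟩ : Nonempty (Quotient (QuotientGroup.rightRel C) ≃
      Quotient (QuotientGroup.rightRel C')) := by
    rwa [← Finite.card_eq, card_quotientRightRel, card_quotientRightRel]
  refine ⟨C.prodQuotientRightRelEquiv.symm.trans
    ((φ.toEquiv.prodCongr β).trans C'.prodQuotientRightRelEquiv), fun c x => ?_⟩
  obtain ⟨⟨d, q⟩, rfl⟩ := C.prodQuotientRightRelEquiv.surjective x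
  simp [← prodQuotientRightRelEquiv_mul]

end Subgroup

lemma HNNExtension.exists_hom_perm_injective {A : Type*} [Group A] [Finite A]
    (C C' : Subgroup A) (φ : C ≃* C') :
    ∃ Φ : HNNExtension A C C' φ →* Equiv.Perm A, Function.Injective (Φ.comp of) := by
  obtain ⟨σ, hσ⟩ := C.exists_perm_mul_eq_map_mul φ
  refine ⟨lift (MulAction.toPermHom A A) σ fun c => Equiv.ext (hσ c), fun a b hab => ?_⟩
  simpa using congr($hab 1)

lemma MonoidHom.eq_one_of_smul_eq_self_of_injective_comp {G H P : Type*} [Group G] [Group H]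
    [Group P] {ι : H →* G} {Φ : G →* P} (hΦ : Function.Injective (Φ.comp ι)) {h : H} {v : G ⧸ Φ.ker}
    (hv : ι h • v = v) : h = 1 := by
  obtain ⟨x, rfl⟩ := QuotientGroup.mk_surjective v
  have hx : Φ x⁻¹ * Φ (ι h)⁻¹ * Φ x = 1 := by
    simpa [mul_assoc] using QuotientGroup.eq.mp hv
  refine hΦ ?_
  simpa [mul_assoc, inv_mul_eq_one, mul_eq_one_iff_eq_inv] using hx

namespace MonoidHom

variable {G V H : Type*} [Group G] [MulAction G V] [Group H] (ι : H →* G)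

def orbitSetoid : Setoid V where
  r v w := ∃ h : H, ι h • v = w
  iseqv := by
    refine ⟨fun v => ⟨1, by simp⟩, ?_, ?_⟩
    · rintro v w ⟨h, rfl⟩
      exact ⟨h⁻¹, by simp [smul_smul]⟩
    · rintro u v w ⟨h, rfl⟩ ⟨h', rfl⟩
      exact ⟨h' * h, by simp [mul_smul]⟩

noncomputable def orbitRep (v : V) : V := (Quotient.mk ι.orbitSetoid v).out

lemma exists_smul_orbitRep (v : V) : ∃ h : H, ι h • ι.orbitRep v = v :=
  Quotient.exact (Quotient.out_eq (Quotient.mk ι.orbitSetoid v))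

noncomputable def orbitCoord (v : V) : H := (ι.exists_smul_orbitRep v).choose

lemma orbitCoord_smul_orbitRep (v : V) : ι (ι.orbitCoord v) • ι.orbitRep v = v :=
  (ι.exists_smul_orbitRep v).choose_spec

lemma orbitRep_smul (h : H) (v : V) : ι.orbitRep (ι h • v) = ι.orbitRep v :=
  congrArg Quotient.out (Quotient.sound (⟨h, rfl⟩ : ι.orbitSetoid v (ι h • v))).symm

lemma orbitRep_orbitRep (v : V) : ι.orbitRep (ι.orbitRep v) = ι.orbitRep v := by
  conv_rhs => rw [← ι.orbitCoord_smul_orbitRep v, orbitRep_smul]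

variable {ι} (hfree : ∀ (h : H) (v : V), ι h • v = v → h = 1)
include hfree

lemma orbitCoord_eq_of_smul_orbitRep {h : H} {v : V} (hv : ι h • ι.orbitRep v = v) :
    ι.orbitCoord v = h := by
  refine (inv_mul_eq_one.mp (hfree _ (ι.orbitRep v) ?_)).symm
  rw [map_mul, mul_smul, orbitCoord_smul_orbitRep, map_inv, inv_smul_eq_iff, hv]

lemma orbitCoord_smul (h : H) (v : V) : ι.orbitCoord (ι h • v) = h * ι.orbitCoord v :=
  orbitCoord_eq_of_smul_orbitRep hfree <| by
    rw [orbitRep_smul, map_mul, mul_smul, orbitCoord_smul_orbitRep]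

lemma orbitCoord_eq_one {v : V} (hv : ι.orbitRep v = v) : ι.orbitCoord v = 1 :=
  orbitCoord_eq_of_smul_orbitRep hfree (by rw [map_one, one_smul, hv])

end MonoidHom

namespace SemidirectProduct

variable {G V X : Type*} [Group G] [MulAction G V] [Group X]

lemma mulAutArrow_mul_left_apply (x y : (V → X) ⋊[mulAutArrow] G) (v : V) :
    (x * y).left v = x.left v * y.left (x.right⁻¹ • v) :=
  rfl

lemma mulAutArrow_inv_left_apply (x : (V → X) ⋊[mulAutArrow] G) (v : V) :
    x⁻¹.left v = (x.left (x.right • v))⁻¹ := by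
  rw [inv_left]
  change x.left⁻¹ (x.right⁻¹⁻¹ • v) = _
  rw [Pi.inv_apply, inv_inv]

lemma mulAutArrow_conj_inl_left_apply (s : V → X) (x : (V → X) ⋊[mulAutArrow] G) (v : V) :
    (MulAut.conj (inl s) x).left v = s v * x.left v * (s (x.right⁻¹ • v))⁻¹ := by
  simp [MulAut.conj_apply, mulAutArrow_mul_left_apply, mulAutArrow_inv_left_apply]

/-- In the action groupoid, the arrow `ι h` into `v` is the arrow from the orbit representative
to `v` composed with the inverse of the arrow from the representative to `(ι h)⁻¹ • v`. -/
lemma mulAutArrow_left_apply_eq {H : Type*} [Group H] {ι : H →* G}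
    (hfree : ∀ (h : H) (v : V), ι h • v = v → h = 1) (F : G →* (V → X) ⋊[mulAutArrow] G)
    (hF : ∀ g, (F g).right = g) (h : H) (v : V) :
    (F (ι h)).left v = (F (ι (ι.orbitCoord v))).left v *
      ((F (ι (ι.orbitCoord ((ι h)⁻¹ • v)))).left ((ι h)⁻¹ • v))⁻¹ := by
  set u := (ι h)⁻¹ • v
  have hv : ι h • u = v := smul_inv_smul _ v
  have hh : h = ι.orbitCoord v * (ι.orbitCoord u)⁻¹ := by
    rw [← hv, MonoidHom.orbitCoord_smul hfree, mul_inv_cancel_right]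
  have hrep : (ι (ι.orbitCoord v))⁻¹ • v = ι.orbitRep u := by
    have : ι.orbitRep v = ι.orbitRep u := by rw [← hv, MonoidHom.orbitRep_smul]
    rw [inv_smul_eq_iff, ← this, MonoidHom.orbitCoord_smul_orbitRep]
  rw [hh, map_mul, map_inv, map_mul, map_inv, mulAutArrow_mul_left_apply, hF,
    mulAutArrow_inv_left_apply, hF, hrep, MonoidHom.orbitCoord_smul_orbitRep]

lemma mulAutArrow_apply_eq_of_orbitCoord {H : Type*} [Group H] {ι : H →* G}
    (hfree : ∀ (h : H) (v : V), ι h • v = v → h = 1) {F₁ F₂ : G →* (V → X) ⋊[mulAutArrow] G}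
    (hF₁ : ∀ g, (F₁ g).right = g) (hF₂ : ∀ g, (F₂ g).right = g)
    (h : ∀ v, (F₁ (ι (ι.orbitCoord v))).left v = (F₂ (ι (ι.orbitCoord v))).left v) (x : H) :
    F₁ (ι x) = F₂ (ι x) := by
  ext v
  · rw [mulAutArrow_left_apply_eq hfree F₁ hF₁, mulAutArrow_left_apply_eq hfree F₂ hF₂, h, h]
  · rw [hF₁, hF₂]

end SemidirectProduct

lemma CategoryTheory.ActionCategory.map_eq_curry_left {G V H : Type*} [Group G] [MulAction G V]
    [Group H] (E : ActionCategory G V ⥤ SingleObj H) {x y : ActionCategory G V} (m : x ⟶ y) :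
    E.map m = (curry E m.val).left y.back := by
  cases m using ActionCategory.cases
  rfl

namespace HNNExtension

open SemidirectProduct
open MonoidHom (orbitRep orbitCoord orbitRep_smul orbitRep_orbitRep
  orbitCoord_smul_orbitRep)

variable {A : Type*} [Group A] {C C' : Subgroup A} {φ : C ≃* C'} {V X : Type*}
  [MulAction (HNNExtension A C C' φ) V] [Group X]

local notation "ιA" => (of : A →* HNNExtension A C C' φ)
local notation "τ" => (t : HNNExtension A C C' φ)
local notation "ιC" => MonoidHom.comp (of : A →* HNNExtension A C C' φ) (Subgroup.subtype C)

/-- The relation `t * of c = of (φ c) * t` writes the arrow `t` into `t • u` as a `t`-arrow out of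
the representative of the `C`-orbit of `u`, conjugated by arrows labelled by `A`. -/
lemma mulAutArrow_t_left_apply (F : HNNExtension A C C' φ →* (V → X) ⋊[mulAutArrow] _)
    (hF : ∀ g, (F g).right = g) (u : V) :
    (F τ).left (τ • u) = (F (ιA (φ (orbitCoord ιC u : C) : A))).left (τ • u) *
      (F τ).left (τ • orbitRep ιC u) * ((F (ιA (orbitCoord ιC u : C))).left u)⁻¹ := by
  set c := orbitCoord ιC u
  have hw : ιA c • orbitRep ιC u = u := orbitCoord_smul_orbitRep ιC u
  have ht : ιA (φ c) * τ = τ * ιA c := (t_mul_of c).symm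
  have h₁ : (ιA (φ c))⁻¹ • τ • u = τ • orbitRep ιC u := by
    rw [inv_smul_eq_iff, smul_smul, ht, mul_smul, hw]
  have h₂ : ιA c • (ιA (φ c) * τ)⁻¹ • τ • u = u := by
    rw [ht, mul_inv_rev, mul_smul, inv_smul_smul, smul_inv_smul]
  calc (F τ).left (τ • u) = (F (ιA (φ c) * τ * (ιA c)⁻¹)).left (τ • u) := by
        rw [ht, mul_inv_cancel_right]
    _ = _ := by
        rw [map_mul F (ιA (φ c) * τ), mulAutArrow_mul_left_apply, hF, map_inv,
          mulAutArrow_inv_left_apply, hF, h₂, map_mul, mulAutArrow_mul_left_apply, hF, h₁]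

lemma mulAutArrow_hom_ext (hfree : ∀ (a : A) (v : V), ιA a • v = v → a = 1)
    {F₁ F₂ : HNNExtension A C C' φ →* (V → X) ⋊[mulAutArrow] _}
    (hF₁ : ∀ g, (F₁ g).right = g) (hF₂ : ∀ g, (F₂ g).right = g)
    (hA : ∀ v, (F₁ (ιA (orbitCoord ιA v))).left v = (F₂ (ιA (orbitCoord ιA v))).left v)
    (ht : ∀ w, orbitRep ιC w = w → (F₁ τ).left (τ • w) = (F₂ τ).left (τ • w)) :
    F₁ = F₂ := by
  have hA' := mulAutArrow_apply_eq_of_orbitCoord hfree hF₁ hF₂ hA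
  refine hom_ext (MonoidHom.ext hA') ?_
  ext x
  · rw [← smul_inv_smul τ x, mulAutArrow_t_left_apply F₁ hF₁,
      mulAutArrow_t_left_apply F₂ hF₂, hA', hA', ht _ (orbitRep_orbitRep _ _)]
  · rw [hF₁, hF₂]

/-- The left component of the image of `t`, chosen so that after conjugating by `inl s` the
`t`-arrow out of each `C`-orbit representative `w` gets the label `g w`; it is constant on
`C'`-orbits, as the relation of the HNN extension requires. -/
noncomputable def tTwist (s g : V → X) (x : V) : X :=
  (s (τ • orbitRep ιC (τ⁻¹ • x)))⁻¹ * g (orbitRep ιC (τ⁻¹ • x)) * s (orbitRep ιC (τ⁻¹ • x))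

lemma tTwist_smul (s g : V → X) (c : C) (x : V) :
    tTwist (φ := φ) s g (ιA (φ c) • x) = tTwist (φ := φ) s g x := by
  have : τ⁻¹ • ιA (φ c) • x = ιC c • τ⁻¹ • x := by
    rw [smul_smul, smul_smul]
    congr 1
    rw [inv_mul_eq_iff_eq_mul]
    change _ = τ * (ιA c * τ⁻¹)
    rw [← mul_assoc, t_mul_of, mul_inv_cancel_right]
  simp only [tTwist, this, orbitRep_smul]

noncomputable def liftOfLabels (s g : V → X) :
    HNNExtension A C C' φ →* (V → X) ⋊[mulAutArrow] HNNExtension A C C' φ :=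
  (MulAut.conj (inl s)).toMonoidHom.comp <|
    lift (inr.comp ιA) ⟨tTwist s g, τ⟩ fun c => by
      ext x
      · rw [mulAutArrow_mul_left_apply, mulAutArrow_mul_left_apply]
        simp only [MonoidHom.coe_comp, Function.comp_apply, left_inr, Pi.one_apply, mul_one,
          right_inr, one_mul]
        rw [← tTwist_smul (φ := φ) s g c ((ιA (φ c))⁻¹ • x), smul_inv_smul]
      · simp [t_mul_of]

lemma liftOfLabels_right (s g : V → X) (x : HNNExtension A C C' φ) :
    (liftOfLabels s g x).right = x := by
  have : rightHom.comp (liftOfLabels (φ := φ) s g) = MonoidHom.id _ :=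
    hom_ext (MonoidHom.ext fun a => by simp [liftOfLabels]) (by simp [liftOfLabels])
  exact congr($this x)

lemma liftOfLabels_orbitCoord (s g : V → X) (hs : ∀ v, orbitRep ιA v = v → s v = 1) (v : V) :
    (liftOfLabels s g (ιA (orbitCoord ιA v))).left v = s v := by
  have hrep : (ιA (orbitCoord ιA v))⁻¹ • v = orbitRep ιA v := by
    rw [inv_smul_eq_iff, orbitCoord_smul_orbitRep]
  rw [liftOfLabels, MonoidHom.comp_apply, MulEquiv.coe_toMonoidHom,
    mulAutArrow_conj_inl_left_apply]
  simp [hrep, hs _ (orbitRep_orbitRep _ _)]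

lemma liftOfLabels_t (s g : V → X) {w : V} (hw : orbitRep ιC w = w) :
    (liftOfLabels s g τ).left (τ • w) = g w := by
  rw [liftOfLabels, MonoidHom.comp_apply, MulEquiv.coe_toMonoidHom,
    mulAutArrow_conj_inl_left_apply, lift_t]
  dsimp only
  rw [tTwist, inv_smul_smul, hw]
  group

end HNNExtension

namespace HNNExtension

open MonoidHom (orbitRep orbitCoord orbitCoord_smul_orbitRep orbitCoord_eq_one)

variable {A : Type} [Group A] {C C' : Subgroup A} {φ : C ≃* C'} {V : Type}
  [MulAction (HNNExtension A C C' φ) V]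

local notation "ιA" => (of : A →* HNNExtension A C C' φ)
local notation "τ" => (t : HNNExtension A C C' φ)
local notation "ιC" => MonoidHom.comp (of : A →* HNNExtension A C C' φ) (Subgroup.subtype C)

def ActionGenerators (x y : ActionCategory (HNNExtension A C C' φ) V) : Type :=
  PLift (orbitRep ιA y.back = x.back ∧ x.back ≠ y.back) ⊕
    PLift (orbitRep ιC x.back = x.back ∧ τ • x.back = y.back)

noncomputable def ActionGenerators.toHom {x y : ActionCategory (HNNExtension A C C' φ) V} :
    ActionGenerators x y → (x ⟶ y)
  | .inl h => ⟨ιA (orbitCoord ιA y.back), by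
      change ιA (orbitCoord ιA y.back) • x.back = y.back
      rw [← h.down.1]
      exact orbitCoord_smul_orbitRep ιA y.back⟩
  | .inr h => ⟨τ, h.down.2⟩

def ActionGenerators.star {v : V} (h : orbitRep ιA v ≠ v) :
    ActionGenerators ((orbitRep ιA v : V) : ActionCategory (HNNExtension A C C' φ) V) v :=
  .inl ⟨rfl, h⟩

def ActionGenerators.stable {w : V} (h : orbitRep ιC w = w) :
    ActionGenerators (w : ActionCategory (HNNExtension A C C' φ) V)
      ((τ • w : V) : ActionCategory _ V) :=
  .inr ⟨h, rfl⟩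

variable {X : Type} [Group X] (f : ∀ x y, ActionGenerators (φ := φ) (V := V) x y → X)

open Classical in
noncomputable def starLabel (v : V) : X :=
  if h : orbitRep ιA v ≠ v then f _ _ (.star h) else 1

open Classical in
noncomputable def tLabel (w : V) : X :=
  if h : orbitRep ιC w = w then f _ _ (.stable h) else 1

lemma starLabel_eq_one {v : V} (hv : orbitRep ιA v = v) : starLabel f v = 1 :=
  dif_neg (not_not.mpr hv)

lemma uncurry_liftOfLabels_map {x y} (e : ActionGenerators x y) :
    (ActionCategory.uncurry (liftOfLabels (starLabel f) (tLabel f)) (liftOfLabels_right _ _)).map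
      e.toHom = f x y e := by
  rcases x with ⟨⟨⟩, a : V⟩
  rcases y with ⟨⟨⟩, b : V⟩
  rcases e with ⟨⟨hrep, hne⟩⟩ | ⟨⟨hrep, hts⟩⟩
  · obtain rfl : orbitRep ιA b = a := hrep
    change orbitRep ιA b ≠ b at hne
    change (liftOfLabels _ _ (ιA (orbitCoord ιA b))).left b = _
    rw [liftOfLabels_orbitCoord _ _ (fun _ => starLabel_eq_one f), starLabel, dif_pos hne]
    rfl
  · obtain rfl : τ • a = b := hts
    change orbitRep ιC a = a at hrep
    change (liftOfLabels _ _ τ).left (τ • a) = _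
    rw [liftOfLabels_t _ _ hrep, tLabel, dif_pos hrep]
    rfl

lemma curry_eq_liftOfLabels (hfree : ∀ (a : A) (v : V), ιA a • v = v → a = 1)
    (E : ActionCategory (HNNExtension A C C' φ) V ⥤ SingleObj X)
    (hE : ∀ x y (e : ActionGenerators x y), E.map e.toHom = f x y e) :
    ActionCategory.curry E = liftOfLabels (starLabel f) (tLabel f) := by
  refine mulAutArrow_hom_ext hfree (fun _ => rfl) (liftOfLabels_right _ _) (fun v => ?_)
    (fun w hw => ?_)
  · rw [liftOfLabels_orbitCoord _ _ (fun _ => starLabel_eq_one f)]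
    by_cases h : orbitRep ιA v = v
    · rw [orbitCoord_eq_one hfree h, starLabel_eq_one f h, map_one, map_one]
      rfl
    · rw [starLabel, dif_pos h, ← hE _ _ (.star h)]
      exact (ActionCategory.map_eq_curry_left E (ActionGenerators.star h).toHom).symm
  · rw [liftOfLabels_t _ _ hw, tLabel, dif_pos hw, ← hE _ _ (.stable hw)]
    exact (ActionCategory.map_eq_curry_left E (ActionGenerators.stable hw).toHom).symm

@[reducible] noncomputable def isFreeGroupoidActionCategory
    (hfree : ∀ (a : A) (v : V), ιA a • v = v → a = 1) :
    IsFreeGroupoid (ActionCategory (HNNExtension A C C' φ) V) where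
  quiverGenerators := ⟨ActionGenerators⟩
  of {_ _} e := e.toHom
  unique_lift f := by
    refine ⟨_, fun x y e => uncurry_liftOfLabels_map (fun x y e => f e) e, fun E hE => ?_⟩
    have hcurry := curry_eq_liftOfLabels (fun x y e => f e) hfree E hE
    refine Functor.hext (fun _ => Subsingleton.elim _ _)
      (ActionCategory.cases fun v g => heq_of_eq ?_)
    exact (ActionCategory.map_eq_curry_left E _).trans congr(($hcurry g).left v)

end HNNExtension

lemma Subgroup.isFreeGroup_of_isFreeGroupoid {G : Type} [Group G] (N : Subgroup G)
    [IsFreeGroupoid (ActionCategory G (G ⧸ N))] : IsFreeGroup N :=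
  letI : Group (End (ActionCategory.objEquiv G (G ⧸ N) (1 : G))) := End.group _
  have : IsFreeGroup (End (ActionCategory.objEquiv G (G ⧸ N) (1 : G))) :=
    @IsFreeGroupoid.endIsFreeOfConnectedFree _ _
      (by exact ActionCategory.instIsConnectedOfIsPretransitiveOfNonempty) _ _
  IsFreeGroup.ofMulEquiv (ActionCategory.endMulEquivSubgroup N)

theorem hnnExtension_of_finite_virtuallyFree
    {A : Type} [Group A] [Finite A] (C C' : Subgroup A) (φ : C ≃* C') :
    ∃ H : Subgroup (HNNExtension A C C' φ), H.FiniteIndex ∧ IsFreeGroup H := by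
  obtain ⟨Φ, hΦ⟩ := HNNExtension.exists_hom_perm_injective C C' φ
  let := HNNExtension.isFreeGroupoidActionCategory (V := _ ⧸ Φ.ker) fun _ _ =>
    MonoidHom.eq_one_of_smul_eq_self_of_injective_comp hΦ
  exact ⟨Φ.ker, inferInstance, Φ.ker.isFreeGroup_of_isFreeGroupoid⟩
end

section
/- Let A be a group, C and C' subgroups of A, and φ : C ≃* C' an isomorphism. Let D = A *_{C≅C'} A be the amalgamated free product of two copies of A obtained by identifying the subgroup C' of the first copy with the subgroup C of the second copy via φ⁻¹ (the pushout of the inclusions c' ↦ c' into the first copy and c' ↦ φ⁻¹(c') into the second copy, for c' ∈ C'), and let j₁, j₂ : A →* D be the two canonical injections. Let ψ : j₁(A) ≃* j₂(A) be the isomorphism of subgroups of D induced by the identity map of A (ψ(j₁(a)) = j₂(a)). Then there is a group isomorphism HNNExtension D (j₁(A)) (j₂(A)) ψ ≃* HNNExtension A C C' φ. -/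
/-!
The stable letter of `HNNExtension D j₁(A) j₂(A) ψ` conjugates the first copy of `A` onto the
second, so the second copy is redundant, and the amalgamation relation `j₁ (φ c) = j₂ c` becomes
`t j₁(c) t⁻¹ = j₁(φ c)`, the defining relation of `HNNExtension A C C' φ`. Conversely, sending
the first copy of `A` to `A` and the second to its `t`-conjugate respects the amalgamation, so
it defines a map out of `D`, which extends to the HNN extension by `t ↦ t`.
-/

theorem pushout_hom_ext {P A₁ A₂ D : Type} [Group P] [Group A₁] [Group A₂] [Group D]
    {i₁ : P →* A₁} {i₂ : P →* A₂} {j₁ : A₁ →* D} {j₂ : A₂ →* D}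
    (hcomm : j₁.comp i₁ = j₂.comp i₂)
    (huniv : ∀ (Q : Type) [Group Q] (k₁ : A₁ →* Q) (k₂ : A₂ →* Q),
      k₁.comp i₁ = k₂.comp i₂ → ∃! h : D →* Q, h.comp j₁ = k₁ ∧ h.comp j₂ = k₂)
    {Q : Type} [Group Q] {f g : D →* Q} (h₁ : f.comp j₁ = g.comp j₁)
    (h₂ : f.comp j₂ = g.comp j₂) : f = g := by
  have hcompat : (g.comp j₁).comp i₁ = (g.comp j₂).comp i₂ := by
    rw [MonoidHom.comp_assoc, hcomm, MonoidHom.comp_assoc]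
  obtain ⟨_, _, huniq⟩ := huniv Q _ _ hcompat
  exact (huniq f ⟨h₁, h₂⟩).trans (huniq g ⟨rfl, rfl⟩).symm

namespace HNNExtension

variable {G : Type*} [Group G] {A B : Subgroup G} {φ : A ≃* B}

theorem of_comp_subtype_eq_conj_comp :
    (of : G →* HNNExtension G A B φ).comp B.subtype =
      ((MulAut.conj t).toMonoidHom.comp of).comp (A.subtype.comp φ.symm.toMonoidHom) := by
  ext b
  simpa using equiv_eq_conj (φ := φ) (φ.symm b)

variable {H : Type*} [Group H] {f₁ f₂ : G →* H}

theorem t_mul_of_eq_of_mul_t_of_range_equiv {ψ : f₁.range ≃* f₂.range}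
    (hψ : ∀ (g : G) (hg : f₁ g ∈ f₁.range), ((ψ ⟨f₁ g, hg⟩ : f₂.range) : H) = f₂ g) (g : G) :
    (t : HNNExtension H f₁.range f₂.range ψ) * of (f₁ g) = of (f₂ g) * t := by
  rw [t_mul_of (φ := ψ) ⟨f₁ g, f₁.mem_range.2 ⟨g, rfl⟩⟩, hψ]

end HNNExtension

section AmalgamHNN

open HNNExtension

variable {A : Type} [Group A] {C C' : Subgroup A} {φ : C ≃* C'}
  {D : Type} [Group D] {j₁ j₂ : A →* D} {ψ : j₁.range ≃* j₂.range}

def toAmalgamHNN (hcomm : j₁.comp C'.subtype = j₂.comp (C.subtype.comp φ.symm.toMonoidHom))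
    (hψ : ∀ (a : A) (ha : j₁ a ∈ j₁.range), ((ψ ⟨j₁ a, ha⟩ : j₂.range) : D) = j₂ a) :
    HNNExtension A C C' φ →* HNNExtension D j₁.range j₂.range ψ :=
  lift (of.comp j₁) t fun c => by
    have hc : j₁ (φ c : A) = j₂ (c : A) := by
      simpa using DFunLike.congr_fun hcomm (φ c)
    simp only [MonoidHom.comp_apply, hc]
    exact t_mul_of_eq_of_mul_t_of_range_equiv hψ c

def ofAmalgamHNN
    (hψ : ∀ (a : A) (ha : j₁ a ∈ j₁.range), ((ψ ⟨j₁ a, ha⟩ : j₂.range) : D) = j₂ a)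
    (h : D →* HNNExtension A C C' φ) (h₁ : h.comp j₁ = of)
    (h₂ : h.comp j₂ = (MulAut.conj t).toMonoidHom.comp of) :
    HNNExtension D j₁.range j₂.range ψ →* HNNExtension A C C' φ :=
  lift h t <| by
    rintro ⟨_, a, rfl⟩
    change t * h (j₁ a) = h (ψ ⟨j₁ a, j₁.mem_range.2 ⟨a, rfl⟩⟩) * t
    rw [hψ, ← MonoidHom.comp_apply h j₁, ← MonoidHom.comp_apply h j₂, h₁, h₂]
    simp

variable (hcomm : j₁.comp C'.subtype = j₂.comp (C.subtype.comp φ.symm.toMonoidHom))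
  (hψ : ∀ (a : A) (ha : j₁ a ∈ j₁.range), ((ψ ⟨j₁ a, ha⟩ : j₂.range) : D) = j₂ a)

@[simp]
theorem toAmalgamHNN_of (a : A) : toAmalgamHNN hcomm hψ (of a) = of (j₁ a) :=
  lift_of _ _ _ a

@[simp]
theorem toAmalgamHNN_t : toAmalgamHNN hcomm hψ t = t :=
  lift_t _ _ _

theorem toAmalgamHNN_comp_eq_of {h : D →* HNNExtension A C C' φ} (h₁ : h.comp j₁ = of)
    (h₂ : h.comp j₂ = (MulAut.conj t).toMonoidHom.comp of)
    (huniv : ∀ (Q : Type) [Group Q] (k₁ k₂ : A →* Q),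
      k₁.comp C'.subtype = k₂.comp (C.subtype.comp φ.symm.toMonoidHom) →
        ∃! h : D →* Q, h.comp j₁ = k₁ ∧ h.comp j₂ = k₂) :
    (toAmalgamHNN hcomm hψ).comp h = of := by
  refine pushout_hom_ext hcomm huniv ?_ ?_ <;> ext a
  · simpa using congrArg (toAmalgamHNN hcomm hψ) (DFunLike.congr_fun h₁ a)
  · have ha : h (j₂ a) = t * of a * t⁻¹ := DFunLike.congr_fun h₂ a
    simp [ha, t_mul_of_eq_of_mul_t_of_range_equiv hψ]

variable {h : D →* HNNExtension A C C' φ} (h₁ : h.comp j₁ = of)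
  (h₂ : h.comp j₂ = (MulAut.conj t).toMonoidHom.comp of)

@[simp]
theorem ofAmalgamHNN_of (d : D) : ofAmalgamHNN hψ h h₁ h₂ (of d) = h d :=
  lift_of _ _ _ d

@[simp]
theorem ofAmalgamHNN_t : ofAmalgamHNN hψ h h₁ h₂ t = t :=
  lift_t _ _ _

theorem ofAmalgamHNN_comp_toAmalgamHNN :
    (ofAmalgamHNN hψ h h₁ h₂).comp (toAmalgamHNN hcomm hψ) = MonoidHom.id _ := by
  refine hom_ext ?_ (by simp)
  ext a
  simpa using DFunLike.congr_fun h₁ a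

theorem toAmalgamHNN_comp_ofAmalgamHNN
    (huniv : ∀ (Q : Type) [Group Q] (k₁ k₂ : A →* Q),
      k₁.comp C'.subtype = k₂.comp (C.subtype.comp φ.symm.toMonoidHom) →
        ∃! h : D →* Q, h.comp j₁ = k₁ ∧ h.comp j₂ = k₂) :
    (toAmalgamHNN hcomm hψ).comp (ofAmalgamHNN hψ h h₁ h₂) = MonoidHom.id _ := by
  refine hom_ext ?_ (by simp)
  ext d
  simpa using DFunLike.congr_fun (toAmalgamHNN_comp_eq_of hcomm hψ h₁ h₂ huniv) d

end AmalgamHNN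

theorem hnnExtension_of_amalgam_iso
    {A : Type} [Group A] (C C' : Subgroup A) (φ : C ≃* C')
    (D : Type) [Group D] (j₁ j₂ : A →* D)
    (hcomm : j₁.comp C'.subtype = j₂.comp (C.subtype.comp φ.symm.toMonoidHom))
    (huniv : ∀ (Q : Type) [Group Q] (k₁ k₂ : A →* Q),
      k₁.comp C'.subtype = k₂.comp (C.subtype.comp φ.symm.toMonoidHom) →
        ∃! h : D →* Q, h.comp j₁ = k₁ ∧ h.comp j₂ = k₂)
    (ψ : j₁.range ≃* j₂.range)
    (hψ : ∀ (a : A) (ha : j₁ a ∈ j₁.range), ((ψ ⟨j₁ a, ha⟩ : j₂.range) : D) = j₂ a) :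
    Nonempty (HNNExtension D j₁.range j₂.range ψ ≃* HNNExtension A C C' φ) := by
  obtain ⟨h, ⟨h₁, h₂⟩, -⟩ := huniv _ _ _ HNNExtension.of_comp_subtype_eq_conj_comp
  exact ⟨(ofAmalgamHNN hψ h h₁ h₂).toMulEquiv (toAmalgamHNN hcomm hψ)
    (toAmalgamHNN_comp_ofAmalgamHNN hcomm hψ h₁ h₂ huniv)
    (ofAmalgamHNN_comp_toAmalgamHNN hcomm hψ h₁ h₂)⟩
end
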